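/- arXiv:2511.21973 — 3 statements merged into one kernel-verified Lean document; each statement's English description precedes it below -/
import Mathlib

section
/- In the matched-pair DID setup with ε_1,…,ε_I mutually independent and P(ε_i = 1) = P(ε_i = 0) = 1/2 for every i, the variance estimator S²(Q) satisfies the exact identity E[S²(Q)] = I⁻² Σ_{i=1}^I ν_i² + I⁻² mᵀ (Id − H_Q) m, where m = (m_1,…,m_I)ᵀ with m_i = μ_i / √(1 − h_{ii}). -/
open MeasureTheory ProbabilityTheory Finset Matrix

/-!
With `Z i = ε i - 1/2`, the scaled pair estimators are `y i = m i + c i Z i`, where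
`c i = (t1 i - t2 i) / √(1 - h i i)`. The `Z i` are centred, pairwise uncorrelated by
independence, and `Z i ^ 2 = 1/4`, so the expectation of the quadratic form `yᵀ M y` is
`mᵀ M m + ∑ i, M i i * c i ^ 2 / 4`. For `M = Id - H` the factor `1 - h i i` cancels the
one in `c i ^ 2`, leaving `∑ i, ν i ^ 2`.
-/

section Moments

variable {Ω : Type*} [MeasurableSpace Ω] {P : Measure Ω}

theorem integral_add_mul_mul_add_mul [IsProbabilityMeasure P] {U V : Ω → ℝ}
    (hU : MemLp U 2 P) (hV : MemLp V 2 P) (hU₀ : ∫ ω, U ω ∂P = 0) (hV₀ : ∫ ω, V ω ∂P = 0)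
    (a b c d : ℝ) :
    ∫ ω, (a + c * U ω) * (b + d * V ω) ∂P = a * b + c * d * ∫ ω, U ω * V ω ∂P := by
  have hUV : Integrable (fun ω => U ω * V ω) P := hU.integrable_mul hV
  have hU₁ := hU.integrable one_le_two
  have hV₁ := hV.integrable one_le_two
  calc ∫ ω, (a + c * U ω) * (b + d * V ω) ∂P
      = ∫ ω, (a * b + ((a * d) * V ω + (b * c) * U ω)) + (c * d) * (U ω * V ω) ∂P := by
        congr 1; ext ω; ring
    _ = a * b + c * d * ∫ ω, U ω * V ω ∂P := by
        have hlin : Integrable (fun ω => a * d * V ω + b * c * U ω) P :=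
          (hV₁.const_mul _).add (hU₁.const_mul _)
        have hconst_lin : Integrable (fun ω => a * b + (a * d * V ω + b * c * U ω)) P :=
          (integrable_const _).add hlin
        rw [integral_add hconst_lin (hUV.const_mul _),
          integral_add (integrable_const _) hlin,
          integral_add (hV₁.const_mul _) (hU₁.const_mul _)]
        simp [integral_const_mul, hU₀, hV₀]

theorem integral_dotProduct_mulVec {ι : Type*} [Fintype ι] (X : ι → Ω → ℝ) (M : Matrix ι ι ℝ)
    (hX : ∀ i j, Integrable (fun ω => X i ω * X j ω) P) :
    ∫ ω, (fun i => X i ω) ⬝ᵥ (M *ᵥ fun i => X i ω) ∂P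
      = ∑ i, ∑ j, M i j * ∫ ω, X i ω * X j ω ∂P := by
  have hterm : ∀ i j, Integrable (fun ω => X i ω * (M i j * X j ω)) P := fun i j => by
    simpa only [mul_left_comm] using (hX i j).const_mul (M i j)
  simp only [dotProduct, mulVec, Finset.mul_sum]
  rw [integral_finsetSum _ fun i _ => integrable_finsetSum _ fun j _ => hterm i j]
  refine Finset.sum_congr rfl fun i _ => ?_
  rw [integral_finsetSum _ fun j _ => hterm i j]
  refine Finset.sum_congr rfl fun j _ => ?_
  rw [← integral_const_mul]
  congr 1; ext ω; ring

theorem integral_dotProduct_mulVec_add_mul_of_orthogonal [IsProbabilityMeasure P]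
    {ι : Type*} [Fintype ι] [DecidableEq ι] (Z : ι → Ω → ℝ) (σ : ι → ℝ) (hZ : ∀ i, MemLp (Z i) 2 P)
    (hZ₀ : ∀ i, ∫ ω, Z i ω ∂P = 0)
    (hZZ : ∀ i j, ∫ ω, Z i ω * Z j ω ∂P = if i = j then σ i else 0)
    (a c : ι → ℝ) (M : Matrix ι ι ℝ) :
    ∫ ω, (fun i => a i + c i * Z i ω) ⬝ᵥ (M *ᵥ fun i => a i + c i * Z i ω) ∂P
      = a ⬝ᵥ (M *ᵥ a) + ∑ i, M i i * c i ^ 2 * σ i := by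
  have hX : ∀ i, MemLp (fun ω => a i + c i * Z i ω) 2 P := fun i =>
    (memLp_const (a i)).add ((hZ i).const_mul (c i))
  rw [integral_dotProduct_mulVec _ M fun i j => (hX i).integrable_mul (hX j)]
  simp only [integral_add_mul_mul_add_mul (hZ _) (hZ _) (hZ₀ _) (hZ₀ _), hZZ, dotProduct, mulVec,
    Finset.mul_sum, ← Finset.sum_add_distrib]
  refine Finset.sum_congr rfl fun i _ => ?_
  simp only [mul_add, Finset.sum_add_distrib, mul_ite, mul_zero, Finset.sum_ite_eq,
    Finset.mem_univ, if_true]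
  congr 1
  · exact Finset.sum_congr rfl fun j _ => by ring
  · ring

theorem integral_sub_half_of_fair_coin [IsProbabilityMeasure P] {ε : Ω → ℝ}
    (hmeas : Measurable ε) (hval : ∀ ω, ε ω = 0 ∨ ε ω = 1) (hhalf : P {ω | ε ω = 1} = 1 / 2) :
    ∫ ω, (ε ω - 1 / 2) ∂P = 0 := by
  have hind : ε = {ω | ε ω = 1}.indicator 1 := by
    ext ω
    rcases hval ω with h | h <;> simp [Set.indicator, h]
  have hset : MeasurableSet {ω | ε ω = 1} := hmeas (measurableSet_singleton 1)
  have hint : Integrable ε P := hind ▸ (integrable_const 1).indicator hset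
  rw [integral_sub hint (integrable_const _), hind, integral_indicator_one hset, measureReal_def,
    hhalf]
  simp

theorem memLp_sub_half_of_zero_or_one [IsFiniteMeasure P] {ε : Ω → ℝ} (hmeas : Measurable ε)
    (hval : ∀ ω, ε ω = 0 ∨ ε ω = 1) (p : ENNReal) : MemLp (fun ω => ε ω - 1 / 2) p P :=
  MemLp.of_bound (hmeas.sub measurable_const).aestronglyMeasurable (1 / 2)
    (Filter.Eventually.of_forall fun ω => by rcases hval ω with h | h <;> norm_num [h])

theorem integral_sub_half_mul_sub_half_of_fair_coins [IsProbabilityMeasure P] {ι : Type*}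
    [DecidableEq ι] {ε : ι → Ω → ℝ} (hmeas : ∀ i, Measurable (ε i))
    (hval : ∀ i ω, ε i ω = 0 ∨ ε i ω = 1) (hindep : iIndepFun ε P)
    (hhalf : ∀ i, P {ω | ε i ω = 1} = 1 / 2) (i j : ι) :
    ∫ ω, (ε i ω - 1 / 2) * (ε j ω - 1 / 2) ∂P = if i = j then 1 / 4 else 0 := by
  split_ifs with hij
  · subst hij
    have hsq : ∀ ω, (ε i ω - 1 / 2) * (ε i ω - 1 / 2) = 1 / 4 := fun ω => by
      rcases hval i ω with h | h <;> norm_num [h]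
    simp only [hsq, integral_const, probReal_univ, smul_eq_mul, one_mul]
  · have hZ : IndepFun (fun ω => ε i ω - 1 / 2) (fun ω => ε j ω - 1 / 2) P :=
      (hindep.indepFun hij).comp (measurable_id.sub_const _) (measurable_id.sub_const _)
    rw [hZ.integral_fun_mul_eq_mul_integral ((hmeas i).sub_const _).aestronglyMeasurable
      ((hmeas j).sub_const _).aestronglyMeasurable,
      integral_sub_half_of_fair_coin (hmeas i) (hval i) (hhalf i), zero_mul]

end Moments

theorem variance_estimator_expectation_general
    {Ω : Type*} [MeasurableSpace Ω] (P : Measure Ω) [IsProbabilityMeasure P]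
    (I : ℕ)
    (t1 t2 : Fin I → ℝ)
    (ε : Fin I → Ω → ℝ)
    (hεmeas : ∀ i, Measurable (ε i))
    (hεval : ∀ i ω, ε i ω = 0 ∨ ε i ω = 1)
    (hindep : iIndepFun ε P)
    (hε1 : ∀ i, P {ω | ε i ω = 1} = 1 / 2)
    (H : Matrix (Fin I) (Fin I) ℝ)
    (hdiag : ∀ i, H i i < 1) :
    (∫ ω, ((I : ℝ) ^ 2)⁻¹ *
        ((fun i => (ε i ω * t1 i + (1 - ε i ω) * t2 i) / Real.sqrt (1 - H i i)) ⬝ᵥ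
          ((1 - H) *ᵥ
            fun i => (ε i ω * t1 i + (1 - ε i ω) * t2 i) / Real.sqrt (1 - H i i))) ∂P)
      = ((I : ℝ) ^ 2)⁻¹ * (∑ i : Fin I, (t1 i - t2 i) ^ 2 / 4)
        + ((I : ℝ) ^ 2)⁻¹ *
          ((fun i => ((t1 i + t2 i) / 2) / Real.sqrt (1 - H i i)) ⬝ᵥ
            ((1 - H) *ᵥ fun i => ((t1 i + t2 i) / 2) / Real.sqrt (1 - H i i))) := by
  have hpos : ∀ i, 0 < 1 - H i i := fun i => sub_pos.2 (hdiag i)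
  have hsqrt : ∀ i, Real.sqrt (1 - H i i) ≠ 0 := fun i => (Real.sqrt_pos.2 (hpos i)).ne'
  have hdecomp : ∀ ω, (fun i => (ε i ω * t1 i + (1 - ε i ω) * t2 i) / Real.sqrt (1 - H i i))
      = fun i => (t1 i + t2 i) / 2 / Real.sqrt (1 - H i i)
        + (t1 i - t2 i) / Real.sqrt (1 - H i i) * (ε i ω - 1 / 2) := fun ω => by
    ext i; field_simp; ring
  simp only [hdecomp]
  rw [integral_const_mul, integral_dotProduct_mulVec_add_mul_of_orthogonal _ _
    (fun i => memLp_sub_half_of_zero_or_one (hεmeas i) (hεval i) 2)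
    (fun i => integral_sub_half_of_fair_coin (hεmeas i) (hεval i) (hε1 i))
    (integral_sub_half_mul_sub_half_of_fair_coins hεmeas hεval hindep hε1), mul_add, add_comm]
  congr 2
  refine Finset.sum_congr rfl fun i _ => ?_
  rw [div_pow, Real.sq_sqrt (hpos i).le, Matrix.sub_apply, one_apply_eq]
  field_simp [(hpos i).ne']

/-- **Exact expectation identity for the variance estimator `S²(Q)`.**
In the matched-pair DID setup with `I ≥ 1` pairs, pair-level potential estimator
values `t1 i, t2 i`, and mutually independent assignments `ε i ∈ {0,1}` with
`P(ε i = 1) = P(ε i = 0) = 1/2`, let `Q` be an `I × L` matrix (`L < I`) with `QᵀQ`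
invertible, `H = Q (QᵀQ)⁻¹ Qᵀ` with diagonal entries `H i i < 1`,
`y i = τ̂ i / √(1 - H i i)` and `S²(Q) = I⁻² yᵀ (Id - H) y`.  Then
`E[S²(Q)] = I⁻² ∑ i, ν i² + I⁻² mᵀ (Id - H) m`, where `ν i² = (t1 i - t2 i)²/4`,
`μ i = (t1 i + t2 i)/2`, and `m i = μ i / √(1 - H i i)`. -/
theorem variance_estimator_expectation
    {Ω : Type*} [MeasurableSpace Ω] (P : Measure Ω) [IsProbabilityMeasure P]
    (I L : ℕ) (hI : 1 ≤ I) (hL : L < I)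
    (t1 t2 : Fin I → ℝ)
    (ε : Fin I → Ω → ℝ)
    (hεmeas : ∀ i, Measurable (ε i))
    (hεval : ∀ i ω, ε i ω = 0 ∨ ε i ω = 1)
    (hindep : iIndepFun ε P)
    (hε1 : ∀ i, P {ω | ε i ω = 1} = 1 / 2)
    (hε0 : ∀ i, P {ω | ε i ω = 0} = 1 / 2)
    (Q : Matrix (Fin I) (Fin L) ℝ) (hQ : IsUnit (Qᵀ * Q))
    (H : Matrix (Fin I) (Fin I) ℝ) (hH : H = Q * (Qᵀ * Q)⁻¹ * Qᵀ)
    (hdiag : ∀ i, H i i < 1) :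
    (∫ ω, ((I : ℝ) ^ 2)⁻¹ *
        ((fun i => (ε i ω * t1 i + (1 - ε i ω) * t2 i) / Real.sqrt (1 - H i i)) ⬝ᵥ
          ((1 - H) *ᵥ
            fun i => (ε i ω * t1 i + (1 - ε i ω) * t2 i) / Real.sqrt (1 - H i i))) ∂P)
      = ((I : ℝ) ^ 2)⁻¹ * (∑ i : Fin I, (t1 i - t2 i) ^ 2 / 4)
        + ((I : ℝ) ^ 2)⁻¹ *
          ((fun i => ((t1 i + t2 i) / 2) / Real.sqrt (1 - H i i)) ⬝ᵥ
            ((1 - H) *ᵥ fun i => ((t1 i + t2 i) / 2) / Real.sqrt (1 - H i i))) :=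
  variance_estimator_expectation_general P I t1 t2 ε hεmeas hεval hindep hε1 H hdiag
end

section
/- In the matched-pair DID setup with ε_1,…,ε_I mutually independent and P(ε_i = 1) = P(ε_i = 0) = 1/2 for every i, the variance estimator is conservative in expectation: E[S²(Q)] ≥ Var(τ̂). In particular, since Var(τ̂) = I⁻² Σ_{i=1}^I ν_i², one has E[S²(Q)] ≥ I⁻² Σ_{i=1}^I ν_i². -/
/-!
Put `yᵢ = τ̂ᵢ / √(1 - hᵢᵢ)`. For independent pairs,
`E[yᵀ (Id - H) y] = E[y]ᵀ (Id - H) E[y] + ∑ᵢ (1 - hᵢᵢ) Var(yᵢ)`, and the rescaling turns the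
sum into exactly `∑ᵢ Var(τ̂ᵢ) = I² Var(τ̂)`. The remaining term is nonnegative because `Id - H`
is an orthogonal projection. Finally `τ̂ᵢ` is an affine image of a fair coin, so
`Var(τ̂ᵢ) = (t1ᵢ - t2ᵢ)² / 4`.
-/

open MeasureTheory ProbabilityTheory Finset Matrix

namespace Matrix

variable {m n 𝕜 : Type*} [Fintype m] [Fintype n] [DecidableEq n] [RCLike 𝕜]

theorem isStarProjection_mul_inv_mul_conjTranspose {Q : Matrix m n 𝕜} (hQ : IsUnit (Qᴴ * Q)) :
    IsStarProjection (Q * (Qᴴ * Q)⁻¹ * Qᴴ) where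
  isIdempotentElem := by
    have hinv : (Qᴴ * Q)⁻¹ * (Qᴴ * Q) = 1 := nonsing_inv_mul _ ((isUnit_iff_isUnit_det _).mp hQ)
    calc Q * (Qᴴ * Q)⁻¹ * Qᴴ * (Q * (Qᴴ * Q)⁻¹ * Qᴴ)
        = Q * ((Qᴴ * Q)⁻¹ * (Qᴴ * Q)) * (Qᴴ * Q)⁻¹ * Qᴴ := by simp only [Matrix.mul_assoc]
      _ = Q * (Qᴴ * Q)⁻¹ * Qᴴ := by rw [hinv, Matrix.mul_one]
  isSelfAdjoint := by
    simp [IsSelfAdjoint, star_eq_conjTranspose, conjTranspose_nonsing_inv, Matrix.mul_assoc]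

open scoped MatrixOrder ComplexOrder in
theorem posSemidef_one_sub_mul_inv_mul_conjTranspose [DecidableEq m] {Q : Matrix m n 𝕜}
    (hQ : IsUnit (Qᴴ * Q)) :
    (1 - Q * (Qᴴ * Q)⁻¹ * Qᴴ).PosSemidef :=
  (isStarProjection_mul_inv_mul_conjTranspose hQ).one_sub_nonneg.posSemidef

end Matrix

namespace ProbabilityTheory

variable {Ω : Type*} [MeasurableSpace Ω] {μ : Measure Ω} [IsProbabilityMeasure μ]

theorem integral_mul_eq_mul_integral_add_ite {ι : Type*} [DecidableEq ι] {X : ι → Ω → ℝ}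
    (hX : ∀ i, MemLp (X i) 2 μ) (hindep : Pairwise fun i j => IndepFun (X i) (X j) μ) (i j : ι) :
    ∫ ω, X i ω * X j ω ∂μ = μ[X i] * μ[X j] + if i = j then Var[X i; μ] else 0 := by
  rcases eq_or_ne i j with rfl | hij
  · rw [if_pos rfl, variance_eq_sub (hX i)]
    simp only [Pi.pow_apply, sq]
    ring
  · rw [if_neg hij, add_zero]
    exact (hindep hij).integral_fun_mul_eq_mul_integral (hX i).aestronglyMeasurable
      (hX j).aestronglyMeasurable

theorem integral_dotProduct_mulVec {ι : Type*} [Fintype ι] [DecidableEq ι] {X : ι → Ω → ℝ}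
    (hX : ∀ i, MemLp (X i) 2 μ) (hindep : Pairwise fun i j => IndepFun (X i) (X j) μ)
    (A : Matrix ι ι ℝ) :
    ∫ ω, (fun i => X i ω) ⬝ᵥ (A *ᵥ fun i => X i ω) ∂μ
      = (fun i => μ[X i]) ⬝ᵥ (A *ᵥ fun i => μ[X i]) + ∑ i, A i i * Var[X i; μ] := by
  have hint : ∀ i j, Integrable (fun ω => A i j * (X i ω * X j ω)) μ := fun i j =>
    ((hX i).integrable_mul (hX j)).const_mul _
  have hexpand : ∀ x : ι → ℝ, x ⬝ᵥ (A *ᵥ x) = ∑ i, ∑ j, A i j * (x i * x j) := fun x => by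
    simp only [dotProduct, mulVec, mul_sum]
    exact sum_congr rfl fun i _ => sum_congr rfl fun j _ => by ring
  simp only [hexpand]
  rw [integral_finsetSum _ fun i _ => integrable_finsetSum _ fun j _ => hint i j]
  simp only [integral_finsetSum _ fun j _ => hint _ j, integral_const_mul,
    integral_mul_eq_mul_integral_add_ite hX hindep, mul_add, sum_add_distrib, mul_ite, mul_zero,
    sum_ite_eq]
  simp

theorem variance_eq_mul_one_sub_of_forall_eq_zero_or_eq_one {ε : Ω → ℝ} (hmeas : Measurable ε)
    (hval : ∀ ω, ε ω = 0 ∨ ε ω = 1) :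
    Var[ε; μ] = μ.real {ω | ε ω = 1} * (1 - μ.real {ω | ε ω = 1}) := by
  have hind : ε = {ω | ε ω = 1}.indicator 1 := by
    ext ω
    rcases hval ω with h | h <;> simp [Set.indicator, h]
  have hsq : ε ^ 2 = ε := by
    ext ω
    rcases hval ω with h | h <;> simp [h]
  have hmean : μ[ε] = μ.real {ω | ε ω = 1} := by
    conv_lhs => rw [hind]
    exact integral_indicator_one (hmeas (measurableSet_singleton 1))
  have hL2 : MemLp ε 2 μ := by
    refine MemLp.of_bound hmeas.aestronglyMeasurable 1 (ae_of_all _ fun ω => ?_)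
    rcases hval ω with h | h <;> simp [h]
  rw [variance_eq_sub hL2, hsq, hmean]
  ring

theorem variance_mul_add_one_sub_mul {X : Ω → ℝ} (hX : AEStronglyMeasurable X μ) (a b : ℝ) :
    Var[fun ω => X ω * a + (1 - X ω) * b; μ] = (a - b) ^ 2 * Var[X; μ] := by
  have : (fun ω => X ω * a + (1 - X ω) * b) = fun ω => (a - b) * X ω + b := by
    ext ω; ring
  rw [this, variance_add_const (hX.const_mul _), variance_const_mul]

theorem sum_variance_le_integral_dotProduct_mulVec_div_sqrt {ι : Type*} [Fintype ι]
    [DecidableEq ι] {X : ι → Ω → ℝ} (hX : ∀ i, MemLp (X i) 2 μ)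
    (hindep : Pairwise fun i j => IndepFun (X i) (X j) μ) {A : Matrix ι ι ℝ} (hA : A.PosSemidef)
    (hdiag : ∀ i, 0 < A i i) :
    ∑ i, Var[X i; μ]
      ≤ ∫ ω, (fun i => X i ω / √(A i i)) ⬝ᵥ (A *ᵥ fun i => X i ω / √(A i i)) ∂μ := by
  let Y i ω := X i ω / √(A i i)
  have hY : ∀ i, MemLp (Y i) 2 μ := fun i => by
    simpa only [Y, div_eq_mul_inv] using (hX i).mul_const _
  have hYindep : Pairwise fun i j => IndepFun (Y i) (Y j) μ := fun i j hij =>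
    (hindep hij).comp (measurable_id.div_const _) (measurable_id.div_const _)
  have hYvar : ∀ i, A i i * Var[Y i; μ] = Var[X i; μ] := fun i => by
    simp only [Y, div_eq_mul_inv, variance_mul_const, inv_pow, Real.sq_sqrt (hdiag i).le]
    field_simp [(hdiag i).ne']
  have hmean_nonneg : 0 ≤ (fun i => μ[Y i]) ⬝ᵥ (A *ᵥ fun i => μ[Y i]) := by
    simpa using hA.dotProduct_mulVec_nonneg fun i => μ[Y i]
  calc ∑ i, Var[X i; μ] = ∑ i, A i i * Var[Y i; μ] := by simp only [hYvar]
    _ ≤ (fun i => μ[Y i]) ⬝ᵥ (A *ᵥ fun i => μ[Y i]) + ∑ i, A i i * Var[Y i; μ] :=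
      le_add_of_nonneg_left hmean_nonneg
    _ = _ := (integral_dotProduct_mulVec hY hYindep A).symm

end ProbabilityTheory

theorem variance_estimator_conservative_general
    {Ω : Type*} [MeasurableSpace Ω] (P : Measure Ω) [IsProbabilityMeasure P]
    (I L : ℕ)
    (t1 t2 : Fin I → ℝ)
    (ε : Fin I → Ω → ℝ)
    (hεmeas : ∀ i, Measurable (ε i))
    (hεval : ∀ i ω, ε i ω = 0 ∨ ε i ω = 1)
    (hindep : iIndepFun ε P)
    (hε1 : ∀ i, P {ω | ε i ω = 1} = 1 / 2)
    (Q : Matrix (Fin I) (Fin L) ℝ) (hQ : IsUnit (Qᵀ * Q))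
    (H : Matrix (Fin I) (Fin I) ℝ) (hH : H = Q * (Qᵀ * Q)⁻¹ * Qᵀ)
    (hdiag : ∀ i, H i i < 1) :
    (∫ ω, ((I : ℝ) ^ 2)⁻¹ *
        ((fun i => (ε i ω * t1 i + (1 - ε i ω) * t2 i) / Real.sqrt (1 - H i i)) ⬝ᵥ
          ((1 - H) *ᵥ
            fun i => (ε i ω * t1 i + (1 - ε i ω) * t2 i) / Real.sqrt (1 - H i i))) ∂P)
      ≥ variance (fun ω => (I : ℝ)⁻¹ * ∑ i : Fin I,
          (ε i ω * t1 i + (1 - ε i ω) * t2 i)) P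
    ∧ (∫ ω, ((I : ℝ) ^ 2)⁻¹ *
        ((fun i => (ε i ω * t1 i + (1 - ε i ω) * t2 i) / Real.sqrt (1 - H i i)) ⬝ᵥ
          ((1 - H) *ᵥ
            fun i => (ε i ω * t1 i + (1 - ε i ω) * t2 i) / Real.sqrt (1 - H i i))) ∂P)
      ≥ ((I : ℝ) ^ 2)⁻¹ * ∑ i : Fin I, (t1 i - t2 i) ^ 2 / 4 := by
  set τ : Fin I → Ω → ℝ := fun i ω => ε i ω * t1 i + (1 - ε i ω) * t2 i
  have hτL2 : ∀ i, MemLp (τ i) 2 P := fun i =>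
    MemLp.of_bound (by fun_prop) (|t1 i| + |t2 i|)
      (ae_of_all _ fun ω => by rcases hεval i ω with h | h <;> simp [τ, h])
  have hτindep : Pairwise fun i j => IndepFun (τ i) (τ j) P := fun i j hij =>
    (hindep.indepFun hij).comp (φ := fun x => x * t1 i + (1 - x) * t2 i)
      (ψ := fun x => x * t1 j + (1 - x) * t2 j) (by fun_prop) (by fun_prop)
  have hτvar : ∀ i, Var[τ i; P] = (t1 i - t2 i) ^ 2 / 4 := fun i => by
    rw [variance_mul_add_one_sub_mul (hεmeas i).aestronglyMeasurable,
      variance_eq_mul_one_sub_of_forall_eq_zero_or_eq_one (hεmeas i) (hεval i),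
      measureReal_def, hε1]
    norm_num
    ring
  have hvar : Var[fun ω => (I : ℝ)⁻¹ * ∑ i, τ i ω; P] = ((I : ℝ) ^ 2)⁻¹ * ∑ i, Var[τ i; P] := by
    rw [variance_const_mul, ← IndepFun.variance_sum (fun i _ => hτL2 i)
      (fun i _ j _ hij => hτindep hij), inv_pow]
    congr 2
    ext ω
    exact (Finset.sum_apply ω _ _).symm
  have hPSD : (1 - H).PosSemidef := by
    subst hH
    simpa [conjTranspose_eq_transpose_of_trivial] using
      posSemidef_one_sub_mul_inv_mul_conjTranspose (Q := Q) (by simpa using hQ)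
  have hS : ((I : ℝ) ^ 2)⁻¹ * ∑ i, Var[τ i; P] ≤ ∫ ω, ((I : ℝ) ^ 2)⁻¹ *
        ((fun i => τ i ω / √(1 - H i i)) ⬝ᵥ ((1 - H) *ᵥ fun i => τ i ω / √(1 - H i i))) ∂P := by
    rw [integral_const_mul]
    gcongr
    simpa using sum_variance_le_integral_dotProduct_mulVec_div_sqrt hτL2 hτindep hPSD
      (fun i => by simpa using hdiag i)
  simp only [hτvar] at hvar hS
  exact ⟨hvar ▸ hS, hS⟩

/-- **Conservativeness of the variance estimator `S²(Q)`.**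
In the matched-pair DID setup with `I ≥ 1` pairs, pair-level potential estimator
values `t1 i, t2 i`, and mutually independent assignments `ε i ∈ {0,1}` with
`P(ε i = 1) = P(ε i = 0) = 1/2`, let `Q` be an `I × L` matrix (`L < I`) with `QᵀQ`
invertible, `H = Q (QᵀQ)⁻¹ Qᵀ` with diagonal entries `H i i < 1`,
`y i = τ̂ i / √(1 - H i i)` and `S²(Q) = I⁻² yᵀ (Id - H) y`, where
`τ̂ i = ε i * t1 i + (1 - ε i) * t2 i` and `τ̂ = (1/I) ∑ i, τ̂ i`.  Then the
variance estimator is conservative in expectation: `E[S²(Q)] ≥ Var(τ̂)`; in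
particular `E[S²(Q)] ≥ I⁻² ∑ i, ν i²` where `ν i² = (t1 i - t2 i)²/4`. -/
theorem variance_estimator_conservative
    {Ω : Type*} [MeasurableSpace Ω] (P : Measure Ω) [IsProbabilityMeasure P]
    (I L : ℕ) (hI : 1 ≤ I) (hL : L < I)
    (t1 t2 : Fin I → ℝ)
    (ε : Fin I → Ω → ℝ)
    (hεmeas : ∀ i, Measurable (ε i))
    (hεval : ∀ i ω, ε i ω = 0 ∨ ε i ω = 1)
    (hindep : iIndepFun ε P)
    (hε1 : ∀ i, P {ω | ε i ω = 1} = 1 / 2)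
    (hε0 : ∀ i, P {ω | ε i ω = 0} = 1 / 2)
    (Q : Matrix (Fin I) (Fin L) ℝ) (hQ : IsUnit (Qᵀ * Q))
    (H : Matrix (Fin I) (Fin I) ℝ) (hH : H = Q * (Qᵀ * Q)⁻¹ * Qᵀ)
    (hdiag : ∀ i, H i i < 1) :
    (∫ ω, ((I : ℝ) ^ 2)⁻¹ *
        ((fun i => (ε i ω * t1 i + (1 - ε i ω) * t2 i) / Real.sqrt (1 - H i i)) ⬝ᵥ
          ((1 - H) *ᵥ
            fun i => (ε i ω * t1 i + (1 - ε i ω) * t2 i) / Real.sqrt (1 - H i i))) ∂P)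
      ≥ variance (fun ω => (I : ℝ)⁻¹ * ∑ i : Fin I,
          (ε i ω * t1 i + (1 - ε i ω) * t2 i)) P
    ∧ (∫ ω, ((I : ℝ) ^ 2)⁻¹ *
        ((fun i => (ε i ω * t1 i + (1 - ε i ω) * t2 i) / Real.sqrt (1 - H i i)) ⬝ᵥ
          ((1 - H) *ᵥ
            fun i => (ε i ω * t1 i + (1 - ε i ω) * t2 i) / Real.sqrt (1 - H i i))) ∂P)
      ≥ ((I : ℝ) ^ 2)⁻¹ * ∑ i : Fin I, (t1 i - t2 i) ^ 2 / 4 :=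
  variance_estimator_conservative_general P I L t1 t2 ε hεmeas hεval hindep hε1 Q hQ H hH hdiag
end

section
/- Let L ≥ 1 be fixed and, for each I, let Q_I be an I × L real matrix whose entries are uniformly bounded by a constant C, with (1/I) Q_Iᵀ Q_I converging entrywise to an invertible L × L matrix Q̃, and let μ_{I,1},…,μ_{I,I} be real numbers such that (1/I) Σ_{i=1}^I μ_{I,i}² converges to a finite limit p and, for each l = 1,…,L, (1/I) Σ_{i=1}^I μ_{I,i} (Q_I)_{il} converges to a limit a_l. Then (1/I) μ_Iᵀ (Id − H_{Q_I}) μ_I converges as I → ∞ to p − aᵀ Q̃⁻¹ a, where μ_I = (μ_{I,1},…,μ_{I,I})ᵀ, H_{Q_I} = Q_I (Q_IᵀQ_I)⁻¹ Q_Iᵀ (defined for all sufficiently large I), and a = (a_1,…,a_L)ᵀ; moreover this limit satisfies p − aᵀ Q̃⁻¹ a ≥ 0. -/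
/-!
Writing `H_Q = Q (QᵀQ)⁻¹ Qᵀ` and rescaling by `I⁻¹`, the quadratic form equals
`I⁻¹ ‖μ‖² − vᵀ S⁻¹ v` with `S = I⁻¹ QᵀQ → Q̃` and `v = I⁻¹ Qᵀμ → a`; matrix inversion is continuous
at the invertible `Q̃`, so the limit is `p − aᵀ Q̃⁻¹ a`. Since `Id − H_Q` is a symmetric idempotent,
`μᵀ (Id − H_Q) μ = ‖(Id − H_Q) μ‖² ≥ 0` for every `I`, and the limit is nonnegative.
-/

open Filter Matrix Topology

namespace Matrix

variable {m n R : Type*} [Fintype m] [Fintype n] [DecidableEq n]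

/-- The least-squares projection `H_Q = Q (QᵀQ)⁻¹ Qᵀ`; it is `0` when `QᵀQ` is singular, since then
`(QᵀQ)⁻¹ = 0`. -/
noncomputable def hatMatrix [CommRing R] (Q : Matrix m n R) : Matrix m m R :=
  Q * (Qᵀ * Q)⁻¹ * Qᵀ

theorem inv_smul₀ [Field R] (c : R) (A : Matrix n n R) : (c • A)⁻¹ = c⁻¹ • A⁻¹ := by
  rcases eq_or_ne c 0 with rfl | hc
  · simp
  by_cases hA : IsUnit A.det
  · exact inv_smul' A (Units.mk0 c hc) hA
  · have hcA : ¬IsUnit (c • A).det := by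
      rwa [det_smul, IsUnit.mul_iff, not_and_or, or_iff_right (by simp [hc])]
    rw [nonsing_inv_apply_not_isUnit _ hA, nonsing_inv_apply_not_isUnit _ hcA, smul_zero]

theorem smul_dotProduct_inv_smul_mulVec [Field R] (c : R) (A : Matrix n n R) (u : n → R) :
    (c • u) ⬝ᵥ ((c • A)⁻¹ *ᵥ (c • u)) = c * (u ⬝ᵥ (A⁻¹ *ᵥ u)) := by
  rcases eq_or_ne c 0 with rfl | hc
  · simp
  rw [inv_smul₀, mulVec_smul, smul_mulVec, smul_smul, smul_dotProduct, dotProduct_smul,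
    smul_eq_mul, smul_eq_mul, mul_inv_cancel₀ hc, one_mul]

section Field

variable [Field R] (Q : Matrix m n R)

theorem hatMatrix_transpose : (hatMatrix Q)ᵀ = hatMatrix Q := by
  rw [hatMatrix, transpose_mul, transpose_mul, transpose_transpose, transpose_nonsing_inv,
    transpose_mul, transpose_transpose, Matrix.mul_assoc]

theorem hatMatrix_mul_self : hatMatrix Q * hatMatrix Q = hatMatrix Q := by
  by_cases h : IsUnit (Qᵀ * Q).det
  · calc hatMatrix Q * hatMatrix Q = Q * ((Qᵀ * Q)⁻¹ * (Qᵀ * Q)) * (Qᵀ * Q)⁻¹ * Qᵀ := by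
          simp only [hatMatrix, Matrix.mul_assoc]
      _ = hatMatrix Q := by rw [nonsing_inv_mul _ h, Matrix.mul_one, hatMatrix]
  · simp [hatMatrix, nonsing_inv_apply_not_isUnit _ h]

theorem dotProduct_one_sub_hatMatrix_mulVec [DecidableEq m] (x : m → R) :
    x ⬝ᵥ ((1 - hatMatrix Q) *ᵥ x) = x ⬝ᵥ x - (Qᵀ *ᵥ x) ⬝ᵥ ((Qᵀ * Q)⁻¹ *ᵥ (Qᵀ *ᵥ x)) := by
  rw [sub_mulVec, one_mulVec, dotProduct_sub, hatMatrix, ← mulVec_mulVec, ← mulVec_mulVec,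
    dotProduct_mulVec, ← mulVec_transpose]

end Field

theorem dotProduct_mulVec_nonneg_of_transpose_of_idempotent [Field R] [LinearOrder R]
    [IsStrictOrderedRing R] {P : Matrix m m R} (hsymm : Pᵀ = P) (hidem : P * P = P) (x : m → R) :
    0 ≤ x ⬝ᵥ (P *ᵥ x) := by
  have hsq : x ⬝ᵥ (P *ᵥ x) = (P *ᵥ x) ⬝ᵥ (P *ᵥ x) := by
    conv_lhs => rw [← hidem, ← mulVec_mulVec, dotProduct_mulVec, ← mulVec_transpose, hsymm]
  rw [hsq]
  exact Finset.sum_nonneg fun i _ => mul_self_nonneg _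

theorem dotProduct_one_sub_hatMatrix_mulVec_nonneg [DecidableEq m] [Field R] [LinearOrder R]
    [IsStrictOrderedRing R] (Q : Matrix m n R) (x : m → R) :
    0 ≤ x ⬝ᵥ ((1 - hatMatrix Q) *ᵥ x) := by
  refine dotProduct_mulVec_nonneg_of_transpose_of_idempotent ?_ ?_ x
  · rw [transpose_sub, transpose_one, hatMatrix_transpose]
  · rw [sub_mul, mul_sub, mul_sub, hatMatrix_mul_self, Matrix.one_mul, Matrix.mul_one,
      Matrix.one_mul]
    abel

theorem tendsto_dotProduct_inv_mulVec [Field R] [TopologicalSpace R] [IsTopologicalDivisionRing R]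
    {ι : Type*} {l : Filter ι} {S : ι → Matrix n n R} {v : ι → n → R} {A : Matrix n n R}
    {a : n → R} (hA : IsUnit A.det) (hS : Tendsto S l (𝓝 A)) (hv : Tendsto v l (𝓝 a)) :
    Tendsto (fun i => v i ⬝ᵥ ((S i)⁻¹ *ᵥ v i)) l (𝓝 (a ⬝ᵥ (A⁻¹ *ᵥ a))) := by
  have hdet : ContinuousAt Ring.inverse A.det := by
    rw [Ring.inverse_eq_inv']
    exact continuousAt_inv₀ hA.ne_zero
  have hinv : Tendsto (fun i => (S i)⁻¹) l (𝓝 A⁻¹) :=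
    (continuousAt_matrix_inv A hdet).tendsto.comp hS
  have hform : Continuous fun p : Matrix n n R × (n → R) => p.2 ⬝ᵥ (p.1 *ᵥ p.2) :=
    continuous_snd.dotProduct (continuous_fst.matrix_mulVec continuous_snd)
  exact (hform.tendsto _).comp (hinv.prodMk_nhds hv)

end Matrix

theorem quadratic_form_limit_general
    (L : ℕ)
    (Q : (I : ℕ) → Matrix (Fin I) (Fin L) ℝ)
    (Qt : Matrix (Fin L) (Fin L) ℝ) (hQt : IsUnit Qt)
    (hconv : ∀ l l' : Fin L,
      Tendsto (fun I : ℕ => (I : ℝ)⁻¹ * ((Q I)ᵀ * Q I) l l') atTop (nhds (Qt l l')))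
    (μ : (I : ℕ) → Fin I → ℝ) (p : ℝ)
    (hp : Tendsto (fun I : ℕ => (I : ℝ)⁻¹ * ∑ i : Fin I, (μ I i) ^ 2) atTop (nhds p))
    (a : Fin L → ℝ)
    (ha : ∀ l : Fin L,
      Tendsto (fun I : ℕ => (I : ℝ)⁻¹ * ∑ i : Fin I, μ I i * Q I i l) atTop (nhds (a l))) :
    Tendsto
      (fun I : ℕ => (I : ℝ)⁻¹ *
        (μ I ⬝ᵥ ((1 - Q I * ((Q I)ᵀ * Q I)⁻¹ * (Q I)ᵀ) *ᵥ μ I)))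
      atTop (nhds (p - a ⬝ᵥ (Qt⁻¹ *ᵥ a)))
    ∧ 0 ≤ p - a ⬝ᵥ (Qt⁻¹ *ᵥ a) := by
  set S : ℕ → Matrix (Fin L) (Fin L) ℝ := fun I => (I : ℝ)⁻¹ • ((Q I)ᵀ * Q I)
  set v : ℕ → Fin L → ℝ := fun I => (I : ℝ)⁻¹ • ((Q I)ᵀ *ᵥ μ I)
  have hS : Tendsto S atTop (𝓝 Qt) :=
    tendsto_pi_nhds.2 fun l => tendsto_pi_nhds.2 fun l' => by simpa [S] using hconv l l'
  have hv : Tendsto v atTop (𝓝 a) :=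
    tendsto_pi_nhds.2 fun l => by simpa [v, mulVec, dotProduct, mul_comm] using ha l
  have hform : (fun I : ℕ => (I : ℝ)⁻¹ * (μ I ⬝ᵥ ((1 - hatMatrix (Q I)) *ᵥ μ I))) =
      fun I : ℕ => (I : ℝ)⁻¹ * ∑ i : Fin I, (μ I i) ^ 2 - v I ⬝ᵥ ((S I)⁻¹ *ᵥ v I) := by
    funext I
    rw [dotProduct_one_sub_hatMatrix_mulVec, smul_dotProduct_inv_smul_mulVec, mul_sub]
    simp only [dotProduct, sq]
  have hlim := hform ▸ hp.sub
    (tendsto_dotProduct_inv_mulVec ((isUnit_iff_isUnit_det Qt).mp hQt) hS hv)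
  exact ⟨hlim, ge_of_tendsto' hlim fun I =>
    mul_nonneg (inv_nonneg.2 I.cast_nonneg) (dotProduct_one_sub_hatMatrix_mulVec_nonneg _ _)⟩

/-- **Limit of the quadratic form `I⁻¹ μᵀ (Id − H_Q) μ`.**
Fix `L ≥ 1` and, for each `I`, let `Q I` be an `I × L` real matrix with entries
uniformly bounded by `C`, with `(1/I) (Q I)ᵀ (Q I)` converging entrywise to an
invertible matrix `Q̃`.  Let `μ I : Fin I → ℝ` satisfy `(1/I) ∑ i, (μ I i)² → p`
and, for each `l`, `(1/I) ∑ i, μ I i * Q I i l → a l`.  Then, with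
`H_I = Q I ((Q I)ᵀ Q I)⁻¹ (Q I)ᵀ`, the quadratic form
`(1/I) μ_Iᵀ (Id − H_I) μ_I` converges to `p − aᵀ Q̃⁻¹ a`, and this limit is `≥ 0`. -/
theorem quadratic_form_limit
    (L : ℕ) (hL : 1 ≤ L)
    (Q : (I : ℕ) → Matrix (Fin I) (Fin L) ℝ)
    (C : ℝ) (hC : ∀ I (i : Fin I) (l : Fin L), |Q I i l| ≤ C)
    (Qt : Matrix (Fin L) (Fin L) ℝ) (hQt : IsUnit Qt)
    (hconv : ∀ l l' : Fin L,
      Tendsto (fun I : ℕ => (I : ℝ)⁻¹ * ((Q I)ᵀ * Q I) l l') atTop (nhds (Qt l l')))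
    (μ : (I : ℕ) → Fin I → ℝ) (p : ℝ)
    (hp : Tendsto (fun I : ℕ => (I : ℝ)⁻¹ * ∑ i : Fin I, (μ I i) ^ 2) atTop (nhds p))
    (a : Fin L → ℝ)
    (ha : ∀ l : Fin L,
      Tendsto (fun I : ℕ => (I : ℝ)⁻¹ * ∑ i : Fin I, μ I i * Q I i l) atTop (nhds (a l))) :
    Tendsto
      (fun I : ℕ => (I : ℝ)⁻¹ *
        (μ I ⬝ᵥ ((1 - Q I * ((Q I)ᵀ * Q I)⁻¹ * (Q I)ᵀ) *ᵥ μ I)))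
      atTop (nhds (p - a ⬝ᵥ (Qt⁻¹ *ᵥ a)))
    ∧ 0 ≤ p - a ⬝ᵥ (Qt⁻¹ *ᵥ a) :=
  quadratic_form_limit_general L Q Qt hQt hconv μ p hp a ha
end
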